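/- arXiv:2307.06590 — 3 statements merged into one kernel-verified Lean document; each statement's English description precedes it below -/
import Mathlib

section
/- Let N, M, K be positive integers with M + K ≤ N and K < N, and let H ~ Hypergeometric(N, M, K) (the size of the intersection of a uniformly random K-subset of [N] with a fixed M-subset). Then ℙ[H ≥ 1] ≤ e·K·M/(N−K) · exp(K²/N). -/
/-!
ℙ[H ≥ 1] ≤ 𝔼[H] = KM/N. Combinatorially: of the C(N,K) subsets of size K, those meeting the
fixed M-set number C(N,K) − C(N−M,K) by Vandermonde, and a union bound over the M elements of
that set bounds them by M·C(N−1,K−1) = C(N,K)·KM/N. As N − K ≤ N and e·exp(K²/N) ≥ 1, this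
implies the stated bound.
-/

open Finset

namespace Nat

theorem add_choose_eq_choose_add_sum_Icc (m n k : ℕ) :
    (m + n).choose k = n.choose k + ∑ i ∈ Icc 1 k, m.choose i * n.choose (k - i) := by
  rw [add_choose_eq, Nat.sum_antidiagonal_eq_sum_range_succ_mk, range_eq_Ico,
    sum_eq_sum_Ico_succ_bot k.succ_pos, zero_add, succ_eq_add_one, Ico_add_one_right_eq_Icc]
  simp

theorem add_choose_succ_le (a m k : ℕ) :
    (a + m).choose (k + 1) ≤ a.choose (k + 1) + m * (a + m - 1).choose k := by
  induction m with
  | zero => simp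
  | succ m ih =>
    have hmono : (a + m - 1).choose k ≤ (a + m).choose k := choose_le_choose k (by omega)
    calc (a + (m + 1)).choose (k + 1) = (a + m).choose k + (a + m).choose (k + 1) := by
          rw [← add_assoc, choose_succ_succ']
      _ ≤ (a + m).choose k + (a.choose (k + 1) + m * (a + m).choose k) := by
          grw [ih, hmono]
      _ = a.choose (k + 1) + (m + 1) * (a + (m + 1) - 1).choose k := by
          rw [show a + (m + 1) - 1 = a + m by omega]; ring

theorem sum_Icc_choose_mul_choose_le (m a k : ℕ) :
    ∑ i ∈ Icc 1 (k + 1), m.choose i * a.choose (k + 1 - i) ≤ m * (m + a - 1).choose k := by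
  have hsplit := add_choose_eq_choose_add_sum_Icc m a (k + 1)
  have hunion := add_choose_succ_le a m k
  rw [add_comm a m] at hunion
  omega

end Nat

theorem sum_Icc_choose_mul_choose_div_le (N M K : ℕ) (hMN : M ≤ N) (hKN : K ≤ N) :
    ∑ k ∈ Icc 1 K, (M.choose k : ℝ) * ((N - M).choose (K - k) : ℝ) / (N.choose K : ℝ)
      ≤ K * M / N := by
  obtain _ | k := K
  · simp
  obtain ⟨n, rfl⟩ : ∃ n, N = n + 1 := ⟨N - 1, by omega⟩
  have hunion : ∑ i ∈ Icc 1 (k + 1), (M.choose i : ℝ) * ((n + 1 - M).choose (k + 1 - i) : ℝ)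
      ≤ M * (n.choose k : ℝ) := by
    have := Nat.sum_Icc_choose_mul_choose_le M (n + 1 - M) k
    rw [Nat.add_sub_cancel' hMN, Nat.add_sub_cancel] at this
    exact_mod_cast this
  have hchoose : ((n + 1).choose (k + 1) : ℝ) * (k + 1) = (n + 1) * n.choose k := by
    exact_mod_cast (Nat.add_one_mul_choose_eq n k).symm
  have hpos : (0 : ℝ) < (n + 1).choose (k + 1) := by exact_mod_cast Nat.choose_pos hKN
  rw [← sum_div, div_le_div_iff₀ hpos (by positivity)]
  push_cast
  nlinarith

theorem hypergeometric_ge_one_bound_general (N M K : ℕ)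
    (hMK : M + K ≤ N) (hKN : K < N) :
    (∑ k ∈ Finset.Icc 1 K,
        (M.choose k : ℝ) * ((N - M).choose (K - k) : ℝ) / (N.choose K : ℝ))
      ≤ Real.exp 1 * K * M / ((N : ℝ) - K) * Real.exp ((K : ℝ) ^ 2 / N) := by
  have hNK : (0 : ℝ) < N - K := sub_pos.mpr (by exact_mod_cast hKN)
  have hexp : 1 ≤ Real.exp 1 * Real.exp ((K : ℝ) ^ 2 / N) :=
    one_le_mul_of_one_le_of_one_le (Real.one_le_exp zero_le_one)
      (Real.one_le_exp (by positivity))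
  calc _ ≤ (K : ℝ) * M / N := sum_Icc_choose_mul_choose_div_le N M K (by omega) hKN.le
    _ ≤ K * M / (N - K) := by gcongr; simp
    _ ≤ K * M / (N - K) * (Real.exp 1 * Real.exp ((K : ℝ) ^ 2 / N)) :=
      le_mul_of_one_le_right (by positivity) hexp
    _ = _ := by ring

/-- Hypergeometric tail bound: for `H ~ Hypergeometric(N, M, K)`,
`ℙ[H ≥ 1] ≤ e·K·M/(N−K) · exp(K²/N)` (when `KM/(N−K) ≤ 1`). -/
theorem hypergeometric_ge_one_bound (N M K : ℕ)
    (hM : 0 < M) (hK : 0 < K) (hMK : M + K ≤ N) (hKN : K < N)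
    (hsmall : (K : ℝ) * M / ((N : ℝ) - K) ≤ 1) :
    (∑ k ∈ Finset.Icc 1 K,
        (M.choose k : ℝ) * ((N - M).choose (K - k) : ℝ) / (N.choose K : ℝ))
      ≤ Real.exp 1 * K * M / ((N : ℝ) - K) * Real.exp ((K : ℝ) ^ 2 / N) :=
  hypergeometric_ge_one_bound_general N M K hMK hKN
end

section
/- Let N, M, K be positive integers with M + K ≤ N. For H ~ Hypergeometric(N, M, K), ℙ[H ≥ 3] ≤ (1 − K/N)^{−K} · (KM/(N−K))³ when KM/(N−K) ≤ 1. -/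
/-! Bound the hypergeometric probabilities termwise by Poisson-like weights,
`ℙ[H = k] ≤ (KM/(N−K))^k / k!`: `C(M,k) ≤ M^k/k!`, and choosing the remaining `K − k`
elements among the other `N − M` instead of among `N − k` loses at least the factor
`K^(k)/N^(k) ≤ (K/(N−K))^k` of falling factorials. The tail `∑_{k≥3} x^k/k!` of the
exponential series is at most `x³ e/6 ≤ x³` for `0 ≤ x ≤ 1`, and `(1 − K/N)^{−K} ≥ 1`. -/

open Finset Nat Real

theorem Nat.choose_mul_descFactorial_eq_descFactorial_mul_choose {n k s : ℕ} (hsk : s ≤ k) :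
    n.choose k * k.descFactorial s = n.descFactorial s * (n - s).choose (k - s) := by
  rw [descFactorial_eq_factorial_mul_choose, descFactorial_eq_factorial_mul_choose,
    mul_left_comm, choose_mul hsk]
  ring

theorem Nat.pow_sub_le_descFactorial_of_le {n k m : ℕ} (hkm : k ≤ m) :
    (n - m) ^ k ≤ n.descFactorial k :=
  (Nat.pow_le_pow_left (by omega) k).trans (pow_sub_le_descFactorial n k)

theorem choose_sub_div_choose_le {N M K k : ℕ} (hkM : k ≤ M) (hkK : k ≤ K) (hKN : K < N) :
    ((N - M).choose (K - k) : ℝ) / N.choose K ≤ ((K : ℝ) / (N - K)) ^ k := by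
  have hNK : (0 : ℝ) < N - K := by
    rw [sub_pos]
    exact_mod_cast hKN
  have hchoose : (0 : ℝ) < N.choose K := by exact_mod_cast choose_pos hKN.le
  have hdesc : (0 : ℝ) < N.descFactorial k := by exact_mod_cast descFactorial_pos.2 (by omega)
  have hid : (N.choose K : ℝ) * K.descFactorial k = N.descFactorial k * (N - k).choose (K - k) := by
    exact_mod_cast choose_mul_descFactorial_eq_descFactorial_mul_choose hkK
  have hpow : ((N : ℝ) - K) ^ k ≤ N.descFactorial k := by
    rw [← cast_sub hKN.le]
    exact_mod_cast pow_sub_le_descFactorial_of_le hkK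
  calc ((N - M).choose (K - k) : ℝ) / N.choose K
      ≤ (N - k).choose (K - k) / N.choose K := by
        gcongr
    _ = K.descFactorial k / N.descFactorial k := by
        rw [div_eq_div_iff hchoose.ne' hdesc.ne']
        linear_combination -hid
    _ ≤ K ^ k / (N - K) ^ k := by
        gcongr
        exact_mod_cast descFactorial_le_pow K k
    _ = ((K : ℝ) / (N - K)) ^ k := (div_pow _ _ _).symm

theorem hypergeometric_term_le {N M K k : ℕ} (hkK : k ≤ K) (hKN : K < N) :
    (M.choose k : ℝ) * (N - M).choose (K - k) / N.choose K
      ≤ ((K : ℝ) * M / (N - K)) ^ k / k ! := by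
  rcases lt_or_ge M k with hMk | hkM
  · rw [choose_eq_zero_of_lt hMk, cast_zero, zero_mul, zero_div]
    have : (0 : ℝ) ≤ N - K := sub_nonneg.2 (by exact_mod_cast hKN.le)
    positivity
  · calc (M.choose k : ℝ) * (N - M).choose (K - k) / N.choose K
        = M.choose k * ((N - M).choose (K - k) / N.choose K) := mul_div_assoc _ _ _
      _ ≤ M ^ k / k ! * ((K : ℝ) / (N - K)) ^ k := by
        gcongr
        · exact choose_le_pow_div k M
        · exact choose_sub_div_choose_le hkM hkK hKN
      _ = ((K : ℝ) * M / (N - K)) ^ k / k ! := by ring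

theorem Real.sum_Ico_pow_div_factorial_le {x : ℝ} (hx : 0 ≤ x) (n m : ℕ) :
    ∑ k ∈ Ico n m, x ^ k / k ! ≤ x ^ n / n ! * exp x := by
  rw [sum_Ico_eq_sum_range]
  calc ∑ i ∈ range (m - n), x ^ (n + i) / (n + i)!
      ≤ ∑ i ∈ range (m - n), x ^ n / n ! * (x ^ i / i !) := by
        gcongr with i
        rw [div_mul_div_comm (x ^ n), ← pow_add]
        gcongr
        exact_mod_cast le_of_dvd (factorial_pos _) (factorial_mul_factorial_dvd_factorial_add n i)
    _ ≤ x ^ n / n ! * exp x := by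
        rw [← mul_sum]
        gcongr
        exact sum_le_exp_of_nonneg hx _

theorem Real.sum_Icc_three_pow_div_factorial_le {x : ℝ} (hx₀ : 0 ≤ x) (hx₁ : x ≤ 1) (K : ℕ) :
    ∑ k ∈ Icc 3 K, x ^ k / k ! ≤ x ^ 3 := by
  have he : exp x ≤ 6 := by
    calc exp x ≤ exp 1 := exp_le_exp.2 hx₁
      _ ≤ 6 := by linarith [exp_one_lt_d9]
  calc ∑ k ∈ Icc 3 K, x ^ k / k ! = ∑ k ∈ Ico 3 (K + 1), x ^ k / k ! := rfl
    _ ≤ x ^ 3 / 3 ! * exp x := sum_Ico_pow_div_factorial_le hx₀ 3 (K + 1)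
    _ ≤ x ^ 3 / 3 ! * 6 := by gcongr
    _ = x ^ 3 := by norm_num [factorial]

theorem hypergeometric_ge_three_bound_general (N M K : ℕ)
    (hM : 0 < M) (hMK : M + K ≤ N)
    (hsmall : (K : ℝ) * M / ((N : ℝ) - K) ≤ 1) :
    (∑ k ∈ Finset.Icc 3 K,
        (M.choose k : ℝ) * ((N - M).choose (K - k) : ℝ) / (N.choose K : ℝ))
      ≤ ((1 - (K : ℝ) / N) ^ K)⁻¹ * ((K : ℝ) * M / ((N : ℝ) - K)) ^ 3 := by
  have hKN : K < N := by omega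
  set x := (K : ℝ) * M / ((N : ℝ) - K)
  have hx : 0 ≤ x := div_nonneg (by positivity) (sub_nonneg.2 (by exact_mod_cast hKN.le))
  have hfactor : 1 ≤ ((1 - (K : ℝ) / N) ^ K)⁻¹ := by
    have hq₀ : 0 < 1 - (K : ℝ) / N :=
      sub_pos.2 ((div_lt_one (by exact_mod_cast (by omega : 0 < N))).2 (by exact_mod_cast hKN))
    have hq₁ : 1 - (K : ℝ) / N ≤ 1 := sub_le_self _ (by positivity)
    exact one_le_inv_iff₀.2 ⟨pow_pos hq₀ K, pow_le_one₀ hq₀.le hq₁⟩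
  calc (∑ k ∈ Icc 3 K, (M.choose k : ℝ) * ((N - M).choose (K - k) : ℝ) / (N.choose K : ℝ))
      ≤ ∑ k ∈ Icc 3 K, x ^ k / k ! :=
        sum_le_sum fun k hk => hypergeometric_term_le (mem_Icc.1 hk).2 hKN
    _ ≤ x ^ 3 := sum_Icc_three_pow_div_factorial_le hx hsmall K
    _ ≤ ((1 - (K : ℝ) / N) ^ K)⁻¹ * x ^ 3 := le_mul_of_one_le_left (by positivity) hfactor

/-- Hypergeometric tail bound: for `H ~ Hypergeometric(N, M, K)`,
`ℙ[H ≥ 3] ≤ (1 − K/N)^{−K} · (KM/(N−K))³` when `KM/(N−K) ≤ 1`. -/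
theorem hypergeometric_ge_three_bound (N M K : ℕ)
    (hM : 0 < M) (hK : 0 < K) (hMK : M + K ≤ N)
    (hsmall : (K : ℝ) * M / ((N : ℝ) - K) ≤ 1) :
    (∑ k ∈ Finset.Icc 3 K,
        (M.choose k : ℝ) * ((N - M).choose (K - k) : ℝ) / (N.choose K : ℝ))
      ≤ ((1 - (K : ℝ) / N) ^ K)⁻¹ * ((K : ℝ) * M / ((N : ℝ) - K)) ^ 3 :=
  hypergeometric_ge_three_bound_general N M K hM hMK hsmall
end

section
/- Let D ≥ 2 and N ≥ 1 be integers, let T be the complete D-ary tree with N+1 generations with leaf set L (|L| = D^N), and let (S_v)_{v ∈ V(T)} be events in a probability space, together with a filtration F₀ ⊆ F₁ ⊆ ... ⊆ F_N such that for each internal vertex v at depth i with children v₁,...,v_D: the events S(v₁),...,S(v_D) are conditionally independent given F_i, have equal conditional probabilities given F_i, and S(v) = ∩_{k=1}^D S(v_k), where S(u) for a vertex u denotes the intersection of events over leaves descending from u. Then ℙ[∩_{v ∈ L} S_v] ≥ (ℙ[S_v₀])^{D^N} for any fixed leaf v₀, whenever ℙ[S_v] is the same for all leaves v. -/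
/-!
Write `p i` for the probability of the event attached to a depth-`i` vertex on the path to the
leaf `v₀`. Conditionally on `F i`, the event at depth `i` is the intersection of `D` independent
events with the same conditional probability `q`, so its conditional probability is `q ^ D`.
Taking expectations and applying Jensen's inequality to the convex function `x ↦ x ^ D` gives
`p (i + 1) ^ D ≤ p i`; iterating from the leaves to the root gives `p N ^ (D ^ N) ≤ p 0`, and the
root event is contained in the intersection of all leaf events.
-/

open MeasureTheory ProbabilityTheory

theorem measureReal_pow_le_of_condExp_indicator_eq_pow {Ω : Type*} {m m₀ : MeasurableSpace Ω}
    {μ : Measure Ω} [IsProbabilityMeasure μ] (hm : m ≤ m₀) {A B : Set Ω}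
    (hA : MeasurableSet A) (hB : MeasurableSet B) (n : ℕ)
    (h : μ[A.indicator (1 : Ω → ℝ) | m] =ᵐ[μ] fun ω => μ[B.indicator (1 : Ω → ℝ) | m] ω ^ n) :
    μ.real B ^ n ≤ μ.real A := by
  set f := μ[B.indicator (1 : Ω → ℝ) | m]
  have hf_nonneg : 0 ≤ᵐ[μ] f :=
    condExp_nonneg (.of_forall fun _ => Set.indicator_nonneg (fun _ _ => zero_le_one) _)
  have hf_pow_int : Integrable (fun ω => f ω ^ n) μ := integrable_condExp.congr h
  calc μ.real B ^ n = (∫ ω, f ω ∂μ) ^ n := by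
        rw [integral_condExp hm, integral_indicator_one hB]
    _ ≤ ∫ ω, f ω ^ n ∂μ :=
        (convexOn_pow n).map_integral_le (continuousOn_pow n) isClosed_Ici hf_nonneg
          integrable_condExp hf_pow_int
    _ = μ.real A := by
        rw [← integral_congr_ae h, integral_condExp hm, integral_indicator_one hA]

theorem ae_prod_eq_pow_card {Ω ι M : Type*} [MeasurableSpace Ω] {μ : Measure Ω} [Fintype ι]
    [CommMonoid M] {f : ι → Ω → M} {g : Ω → M} (h : ∀ k, f k =ᵐ[μ] g) :
    (fun ω => ∏ k, f k ω) =ᵐ[μ] fun ω => g ω ^ Fintype.card ι := by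
  filter_upwards [ae_all_iff.2 h] with ω hω
  simp [hω]

theorem pow_pow_le_of_pow_succ_le {R : Type*} [Semiring R] [PartialOrder R] [IsOrderedRing R]
    {a : ℕ → R} {D N : ℕ} (ha : ∀ i, 0 ≤ a i)
    (h : ∀ i < N, a (i + 1) ^ D ≤ a i) : a N ^ D ^ N ≤ a 0 := by
  suffices ∀ i ≤ N, a N ^ D ^ (N - i) ≤ a i by simpa using this 0 (Nat.zero_le N)
  intro i hi
  induction hi using Nat.decreasingInduction with
  | self => simp
  | of_succ i hi ih =>
    calc a N ^ D ^ (N - i) = (a N ^ D ^ (N - (i + 1))) ^ D := by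
          rw [← pow_mul, ← pow_succ, Nat.sub_add_eq, Nat.sub_add_cancel (by omega)]
      _ ≤ a (i + 1) ^ D := pow_le_pow_left₀ (pow_nonneg (ha N) _) ih D
      _ ≤ a i := h i hi

section TreeEvents

variable {Ω α : Type*} {N : ℕ} {S : (Fin N → α) → Set Ω} {T : ℕ → (Fin N → α) → Set Ω}

theorem treeEvent_subset_leaf (hTN : ∀ w, T N w = S w)
    (hTdef : ∀ i (hi : i < N) (w : Fin N → α),
      T i w = ⋂ k : α, T (i + 1) (Function.update w ⟨i, hi⟩ k))
    {i : ℕ} (hi : i ≤ N) {w v : Fin N → α} (hvw : ∀ j : Fin N, (j : ℕ) < i → v j = w j) :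
    T i w ⊆ S v := by
  induction hi using Nat.decreasingInduction generalizing w with
  | self => rw [hTN, show w = v from funext fun j => (hvw j j.isLt).symm]
  | of_succ i hi ih =>
    refine (hTdef i hi w).trans_subset <|
      (Set.iInter_subset _ (v ⟨i, hi⟩)).trans <| ih fun j hj => ?_
    rcases (Nat.lt_succ_iff_lt_or_eq.1 hj) with hj | hj
    · rw [Function.update_of_ne (fun h => by simp [h] at hj)]
      exact hvw j hj
    · rw [show j = ⟨i, hi⟩ from Fin.ext hj, Function.update_self]

variable [MeasurableSpace Ω] [Finite α]

theorem measurableSet_treeEvent (hSmeas : ∀ v, MeasurableSet (S v)) (hTN : ∀ w, T N w = S w)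
    (hTdef : ∀ i (hi : i < N) (w : Fin N → α),
      T i w = ⋂ k : α, T (i + 1) (Function.update w ⟨i, hi⟩ k))
    {i : ℕ} (hi : i ≤ N) (w : Fin N → α) : MeasurableSet (T i w) := by
  induction hi using Nat.decreasingInduction generalizing w with
  | self => exact hTN w ▸ hSmeas w
  | of_succ i hi ih => exact hTdef i hi w ▸ MeasurableSet.iInter fun k => ih _

end TreeEvents

theorem branching_jensen_general
    (Ω : Type*) [MeasureSpace Ω] [IsProbabilityMeasure (ℙ : Measure Ω)]
    (D N : ℕ)
    (F : ℕ → MeasurableSpace Ω)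
    (hFle : ∀ i, F i ≤ (inferInstance : MeasurableSpace Ω))
    (S : (Fin N → Fin D) → Set Ω) (hSmeas : ∀ v, MeasurableSet (S v))
    (T : ℕ → (Fin N → Fin D) → Set Ω)
    (hTN : ∀ w, T N w = S w)
    (hTdef : ∀ i (hi : i < N) (w : Fin N → Fin D),
      T i w = ⋂ k : Fin D, T (i + 1) (Function.update w ⟨i, hi⟩ k))
    (hcondindep : ∀ i (hi : i < N) (w : Fin N → Fin D),
      (ℙ[(T i w).indicator (fun _ => (1 : ℝ)) | F i])
        =ᵐ[ℙ] fun ω => ∏ k : Fin D,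
          (ℙ[(T (i + 1) (Function.update w ⟨i, hi⟩ k)).indicator (fun _ => (1 : ℝ)) | F i]) ω)
    (heqcond : ∀ i (hi : i < N) (w : Fin N → Fin D) (k k' : Fin D),
      (ℙ[(T (i + 1) (Function.update w ⟨i, hi⟩ k)).indicator (fun _ => (1 : ℝ)) | F i])
        =ᵐ[ℙ]
      (ℙ[(T (i + 1) (Function.update w ⟨i, hi⟩ k')).indicator (fun _ => (1 : ℝ)) | F i]))
    (v₀ : Fin N → Fin D) :
    (ℙ (S v₀)) ^ (D ^ N) ≤ ℙ (⋂ v, S v) := by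
  have hTmeas : ∀ {i}, i ≤ N → ∀ w, MeasurableSet (T i w) :=
    measurableSet_treeEvent hSmeas hTN hTdef
  have hstep : ∀ i < N, volume.real (T (i + 1) v₀) ^ D ≤ volume.real (T i v₀) := fun i hi => by
    have hchildren := ae_prod_eq_pow_card fun k => heqcond i hi v₀ k (v₀ ⟨i, hi⟩)
    rw [Function.update_eq_self, Fintype.card_fin] at hchildren
    exact measureReal_pow_le_of_condExp_indicator_eq_pow (hFle i) (hTmeas hi.le v₀)
      (hTmeas hi v₀) D ((hcondindep i hi v₀).trans hchildren)
  have hroot : volume.real (S v₀) ^ D ^ N ≤ volume.real (T 0 v₀) := by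
    simpa only [hTN] using pow_pow_le_of_pow_succ_le (a := fun i => volume.real (T i v₀))
      (fun _ => measureReal_nonneg) hstep
  calc ℙ (S v₀) ^ D ^ N ≤ ℙ (T 0 v₀) := by
        rwa [← ENNReal.toReal_le_toReal (by finiteness) (measure_ne_top _ _), ENNReal.toReal_pow]
    _ ≤ ℙ (⋂ v, S v) :=
        measure_mono <| Set.subset_iInter fun v =>
          treeEvent_subset_leaf hTN hTdef (Nat.zero_le N) fun _ h => absurd h (Nat.not_lt_zero _)

/-- Iterated Jensen inequality for the branching-OGP argument.  Leaves of the
complete `D`-ary tree with `N + 1` generations are encoded as `Fin N → Fin D`;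
`T i w` is the intersection of the leaf events `S v` over all leaves `v`
agreeing with `w` on the first `i` coordinates.  If at every depth the `D`
child events are conditionally independent given `F i` with equal conditional
probabilities, and all leaf events have the same probability, then
`ℙ[⋂_v S v] ≥ (ℙ[S v₀])^(D^N)`. -/
theorem branching_jensen
    (Ω : Type*) [MeasureSpace Ω] [IsProbabilityMeasure (ℙ : Measure Ω)]
    (D N : ℕ) (hD : 2 ≤ D) (hN : 1 ≤ N)
    (F : ℕ → MeasurableSpace Ω)
    (hFle : ∀ i, F i ≤ (inferInstance : MeasurableSpace Ω))
    (hFmono : Monotone F)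
    (S : (Fin N → Fin D) → Set Ω) (hSmeas : ∀ v, MeasurableSet (S v))
    (T : ℕ → (Fin N → Fin D) → Set Ω)
    (hTN : ∀ w, T N w = S w)
    (hTdef : ∀ i (hi : i < N) (w : Fin N → Fin D),
      T i w = ⋂ k : Fin D, T (i + 1) (Function.update w ⟨i, hi⟩ k))
    (hTagree : ∀ i (w w' : Fin N → Fin D),
      (∀ j : Fin N, (j : ℕ) < i → w j = w' j) → T i w = T i w')
    (hcondindep : ∀ i (hi : i < N) (w : Fin N → Fin D),
      (ℙ[(T i w).indicator (fun _ => (1 : ℝ)) | F i])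
        =ᵐ[ℙ] fun ω => ∏ k : Fin D,
          (ℙ[(T (i + 1) (Function.update w ⟨i, hi⟩ k)).indicator (fun _ => (1 : ℝ)) | F i]) ω)
    (heqcond : ∀ i (hi : i < N) (w : Fin N → Fin D) (k k' : Fin D),
      (ℙ[(T (i + 1) (Function.update w ⟨i, hi⟩ k)).indicator (fun _ => (1 : ℝ)) | F i])
        =ᵐ[ℙ]
      (ℙ[(T (i + 1) (Function.update w ⟨i, hi⟩ k')).indicator (fun _ => (1 : ℝ)) | F i]))
    (heqleaf : ∀ v v' : Fin N → Fin D, ℙ (S v) = ℙ (S v'))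
    (v₀ : Fin N → Fin D) :
    (ℙ (S v₀)) ^ (D ^ N) ≤ ℙ (⋂ v, S v) :=
  branching_jensen_general Ω D N F hFle S hSmeas T hTN hTdef hcondindep heqcond v₀
end
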